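/- J-equivalence with interpretations and with the facts of a program: for every program P and interpretation I ⊆ A (identified with a fact program), P ≡_J I if and only if P is an interpretation (every rule of P is a fact); and P ≡_J f(P) if and only if P = f(P). -/
import Mathlib


/-- A rule `h ← B` over the alphabet `A`: a head atom paired with a finite body. -/
abbrev Rule (A : Type*) := A × Finset A

/-- The heads `h(S)` of a set of rules. -/
def heads {A : Type*} [DecidableEq A] (S : Finset (Rule A)) : Finset A := S.image Prod.fst

/-- The bodies `b(S)` of a set of rules. -/
def bodies {A : Type*} [DecidableEq A] (S : Finset (Rule A)) : Finset A := S.biUnion Prod.snd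

/-- Sequential composition:
`P ∘ R = { h(r) ← b(S) : r ∈ P, S ⊆ R, |S| ≤ sz(r), h(S) = b(r) }`. -/
def comp {A : Type*} [DecidableEq A] (P R : Finset (Rule A)) : Finset (Rule A) :=
  P.biUnion fun r =>
    (R.powerset.filter fun S => S.card ≤ r.2.card ∧ heads S = r.2).image
      fun S => (r.1, bodies S)

/-- The interpretation `I ⊆ A` identified with the fact program `{ a ← ∅ : a ∈ I }`. -/
def interp {A : Type*} [DecidableEq A] (I : Finset A) : Finset (Rule A) :=
  I.image fun a => (a, (∅ : Finset A))

/-- The facts (rules with empty body) `f(P)` of a program. -/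
def factsOf {A : Type*} [DecidableEq A] (P : Finset (Rule A)) : Finset (Rule A) :=
  P.filter fun r => r.2 = ∅

/-- Green's `J`-preorder: `P ≤_J R` iff `P = (Q ∘ R) ∘ S` for some programs `Q, S`. -/
def leJ {A : Type*} [DecidableEq A] (P R : Finset (Rule A)) : Prop :=
  ∃ Q S, P = comp (comp Q R) S

/-- Green's `J`-equivalence. -/
def equivJ {A : Type*} [DecidableEq A] (P R : Finset (Rule A)) : Prop :=
  leJ P R ∧ leJ R P


lemma mem_comp {A : Type*} [DecidableEq A] {P R : Finset (Rule A)} {x : Rule A} :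
    x ∈ comp P R ↔ ∃ r ∈ P, ∃ S, S ⊆ R ∧ S.card ≤ r.2.card ∧ heads S = r.2 ∧
      x = (r.1, bodies S) := by
  simp only [comp, Finset.mem_biUnion, Finset.mem_image, Finset.mem_filter,
    Finset.mem_powerset]
  constructor
  · rintro ⟨r, hr, S, ⟨hS, h1, h2⟩, rfl⟩
    exact ⟨r, hr, S, hS, h1, h2, rfl⟩
  · rintro ⟨r, hr, S, hS, h1, h2, rfl⟩
    exact ⟨r, hr, S, ⟨hS, h1, h2⟩, rfl⟩

lemma comp_of_allFacts {A : Type*} [DecidableEq A] {P : Finset (Rule A)}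
    (hP : ∀ r ∈ P, r.2 = ∅) (R : Finset (Rule A)) : comp P R = P := by
  ext x
  rw [mem_comp]
  constructor
  · rintro ⟨⟨h, b⟩, hr, S, hS, h1, h2, rfl⟩
    have hr2 : b = ∅ := hP _ hr
    subst hr2
    have : S = ∅ := Finset.card_eq_zero.mp (Nat.le_zero.mp (by simpa using h1))
    subst this
    simpa [bodies] using hr
  · intro hx
    refine ⟨x, hx, ∅, Finset.empty_subset _, by simp, ?_, ?_⟩
    · simp [heads, hP x hx]
    · have : x = (x.1, x.2) := rfl
      rw [this]; simp [bodies, hP x hx]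

lemma allFacts_comp {A : Type*} [DecidableEq A] {Q R : Finset (Rule A)}
    (hR : ∀ r ∈ R, r.2 = ∅) : ∀ r ∈ comp Q R, r.2 = ∅ := by
  intro x hx
  rw [mem_comp] at hx
  obtain ⟨r, hr, S, hS, h1, h2, rfl⟩ := hx
  simp only [bodies]
  rw [Finset.eq_empty_iff_forall_notMem]
  intro a ha
  rw [Finset.mem_biUnion] at ha
  obtain ⟨s, hs, ha⟩ := ha
  rw [hR s (hS hs)] at ha
  exact absurd ha (Finset.notMem_empty a)

lemma leJ_of_allFacts {A : Type*} [DecidableEq A] {P : Finset (Rule A)}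
    (hP : ∀ r ∈ P, r.2 = ∅) (R : Finset (Rule A)) : leJ P R :=
  ⟨P, R, by rw [comp_of_allFacts hP R, comp_of_allFacts hP R]⟩

lemma allFacts_of_leJ {A : Type*} [DecidableEq A] {P R : Finset (Rule A)}
    (hR : ∀ r ∈ R, r.2 = ∅) (h : leJ P R) : ∀ r ∈ P, r.2 = ∅ := by
  obtain ⟨Q, S, rfl⟩ := h
  rw [comp_of_allFacts (allFacts_comp hR) S]
  exact allFacts_comp hR

/-- `J`-equivalence with interpretations and with the facts of a program: `P ≡_J I` iff
`P` is an interpretation (every rule of `P` is a fact), and `P ≡_J f(P)` iff `P = f(P)`. -/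
theorem equivJ_interp_and_facts {A : Type*} [DecidableEq A] [Fintype A]
    (P : Finset (Rule A)) (I : Finset A) :
    (equivJ P (interp I) ↔ ∀ r ∈ P, r.2 = ∅) ∧
    (equivJ P (factsOf P) ↔ P = factsOf P) := by
  have hI : ∀ r ∈ interp I, r.2 = ∅ := by
    intro r hr
    simp only [interp, Finset.mem_image] at hr
    obtain ⟨a, _, rfl⟩ := hr
    rfl
  have hF : ∀ r ∈ factsOf P, r.2 = ∅ := by
    intro r hr
    exact (Finset.mem_filter.mp hr).2
  constructor
  · constructor
    · rintro ⟨h1, _⟩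
      exact allFacts_of_leJ hI h1
    · intro hP
      exact ⟨leJ_of_allFacts hP _, leJ_of_allFacts hI _⟩
  · constructor
    · rintro ⟨h1, _⟩
      have hP := allFacts_of_leJ hF h1
      ext x
      simp only [factsOf, Finset.mem_filter]
      exact ⟨fun hx => ⟨hx, hP x hx⟩, fun hx => hx.1⟩
    · intro hPF
      have hP : ∀ r ∈ P, r.2 = ∅ := fun r hr => hF r (hPF ▸ hr)
      exact ⟨leJ_of_allFacts hP _, leJ_of_allFacts hF _⟩
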